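/- arXiv:1310.8099 — 6 statements merged into one kernel-verified Lean document; each statement's English description precedes it below -/
import Mathlib

section
/- Let n ≥ 2 be an integer. For every strip S₁ ⊆ ℝ² and every a > 0, setting S₂ = {(x,y) ∈ ℝ² : |x| < a} (a strip whose axis coincides with the y-axis), one has μ₂(ℝ²)·μ₂(S₁ ∩ S₂) ≥ μ₂(S₁)·μ₂(S₂), where μ₂ is the measure on ℝ² with density C(n)·|x|^{n−2}·e^{−(x²+y²)/2}. -/
/-!
Factor `μ₂ = ν ⊗ γ`, with `ν` of density `C(n)·|x|^(n-2)·exp(-x²/2)` on the `x`-axis and `γ` of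
density `exp(-y²/2)` on the `y`-axis. For fixed `x`, the section of a strip is an interval of fixed
length centred at a point proportional to `x` (or the whole line or nothing, for a vertical strip),
so its `γ`-measure `G x` decreases in `|x|` because the Gaussian density is even and decreasing on
`[0, ∞)`. The indicator of `{|x| < a}` decreases in `|x|` as well, and since `μ₂(S₁) = ∫ G dν`,
`μ₂(S₂) = ν{|x| < a}·γ(ℝ)` and `μ₂(S₁ ∩ S₂) = ∫_{|x| < a} G dν`, the claim is Chebyshev's
integral inequality for these two similarly ordered functions.
-/

open MeasureTheory Set
open scoped ENNReal

/-- A strip in `ℝ²`: the set of points whose inner product with some unit vector `u`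
is smaller than `h > 0` in absolute value. -/
def IsStrip (S : Set (ℝ × ℝ)) : Prop :=
  ∃ u : ℝ × ℝ, ∃ h : ℝ, u.1 ^ 2 + u.2 ^ 2 = 1 ∧ 0 < h ∧
    S = {p : ℝ × ℝ | |p.1 * u.1 + p.2 * u.2| < h}

/-- The measure `μ₂` on `ℝ²` with density `C(n)·|x|^(n-2)·exp(-(x²+y²)/2)`,
where `C(n) = (∫_{-π/2}^{π/2} cos(t)^(n-2) dt)⁻¹`. -/
noncomputable def mu2 (n : ℕ) : Measure (ℝ × ℝ) :=
  volume.withDensity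
    (fun p => ENNReal.ofReal
      ((∫ t in (-(Real.pi / 2))..(Real.pi / 2), Real.cos t ^ (n - 2))⁻¹ *
        |p.1| ^ (n - 2) * Real.exp (-(p.1 ^ 2 + p.2 ^ 2) / 2)))

-- The generic `mul_add_mul_le_mul_add_mul` needs `AddLeftReflectLE`, which fails in `ℝ≥0∞`.
lemma ENNReal.mul_add_mul_le_mul_add_mul {a b c d : ℝ≥0∞} (hab : a ≤ b) (hcd : c ≤ d) :
    a * d + b * c ≤ a * c + b * d := by
  obtain ⟨e, rfl⟩ := exists_add_of_le hab
  obtain ⟨f, rfl⟩ := exists_add_of_le hcd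
  calc a * (c + f) + (a + e) * c = a * c + (a + e) * c + a * f := by ring
    _ ≤ a * c + (a + e) * c + (a + e) * f := by gcongr
    _ = a * c + (a + e) * (c + f) := by ring

lemma Monovary.ennreal_mul_add_mul_le_mul_add_mul {ι : Type*} {f g : ι → ℝ≥0∞}
    (hfg : Monovary f g) (i j : ι) : f i * g j + f j * g i ≤ f i * g i + f j * g j := by
  rcases lt_or_ge (g i) (g j) with hlt | hle
  · exact ENNReal.mul_add_mul_le_mul_add_mul (hfg hlt) hlt.le
  rcases hle.lt_or_eq with hlt | heq
  · rw [add_comm (f i * g j), add_comm (f i * g i)]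
    exact ENNReal.mul_add_mul_le_mul_add_mul (hfg hlt) hlt.le
  · rw [heq]

lemma monovary_of_antitone_along {ι α β γ : Type*} [Preorder α] [LinearOrder β] [LinearOrder γ]
    {f : ι → α} {g : ι → β} (k : ι → γ) (hf : ∀ i j, k i ≤ k j → f j ≤ f i)
    (hg : ∀ i j, k i ≤ k j → g j ≤ g i) : Monovary f g :=
  fun i j hij => hf j i (le_of_not_gt fun hk => (hg i j hk.le).not_gt hij)

/-- Chebyshev's integral inequality, proved by symmetrizing a double integral. -/
theorem lintegral_mul_lintegral_le_of_monovary {α : Type*} [MeasurableSpace α] (μ : Measure α)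
    {φ ψ : α → ℝ≥0∞} (hφ : Measurable φ) (hψ : Measurable ψ) (hφψ : Monovary φ ψ) :
    (∫⁻ x, φ x ∂μ) * ∫⁻ x, ψ x ∂μ ≤ μ univ * ∫⁻ x, φ x * ψ x ∂μ := by
  have iterated {f g f' g' : α → ℝ≥0∞} (hf : Measurable f) (hg : Measurable g)
      (hf' : Measurable f') (hg' : Measurable g') :
      ∫⁻ x, ∫⁻ z, f x * g z + f' x * g' z ∂μ ∂μ =
        (∫⁻ x, f x ∂μ) * (∫⁻ x, g x ∂μ) + (∫⁻ x, f' x ∂μ) * ∫⁻ x, g' x ∂μ := by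
    simp_rw [lintegral_add_left (hg.const_mul _), lintegral_const_mul _ hg,
      lintegral_const_mul _ hg']
    rw [lintegral_add_left (hf.mul_const _), lintegral_mul_const _ hf, lintegral_mul_const _ hf']
  have key : 2 * ((∫⁻ x, φ x ∂μ) * ∫⁻ x, ψ x ∂μ) ≤ 2 * (μ univ * ∫⁻ x, φ x * ψ x ∂μ) :=
    calc 2 * ((∫⁻ x, φ x ∂μ) * ∫⁻ x, ψ x ∂μ)
        = ∫⁻ x, ∫⁻ z, φ x * ψ z + ψ x * φ z ∂μ ∂μ := by
          rw [iterated hφ hψ hψ hφ]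
          ring
      _ ≤ ∫⁻ x, ∫⁻ z, φ x * ψ x + φ z * ψ z ∂μ ∂μ :=
          lintegral_mono fun x => lintegral_mono fun z => by
            rw [mul_comm (ψ x)]
            exact hφψ.ennreal_mul_add_mul_le_mul_add_mul x z
      _ = 2 * (μ univ * ∫⁻ x, φ x * ψ x ∂μ) := by
          have h := iterated (hφ.mul hψ) (measurable_const (a := 1)) (measurable_const (a := 1))
            (hφ.mul hψ)
          simp only [Pi.mul_apply, mul_one, one_mul, lintegral_one] at h
          rw [h]
          ring
  exact (ENNReal.mul_le_mul_iff_right two_ne_zero ENNReal.ofNat_ne_top).mp key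

lemma Function.Even.apply_abs {β : Type*} {f : ℝ → β} (hf : f.Even) (x : ℝ) : f |x| = f x := by
  rcases abs_choice x with h | h <;> rw [h]
  exact hf x

theorem intervalIntegral_window_le_of_abs_le {g : ℝ → ℝ} (hg : Continuous g) (hg_even : g.Even)
    (hg_anti : AntitoneOn g (Ici 0)) {L : ℝ} (hL : 0 ≤ L) {s t : ℝ} (hst : |s| ≤ |t|) :
    ∫ y in t - L..t + L, g y ≤ ∫ y in s - L..s + L, g y := by
  set W : ℝ → ℝ := fun t => ∫ y in t - L..t + L, g y
  have hW_deriv (t : ℝ) : HasDerivAt W (g (t + L) - g (t - L)) t := by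
    have hΦ (b : ℝ) := (hg.integral_hasStrictDerivAt 0 b).hasDerivAt
    have hW : W = fun t => (∫ y in 0..t + L, g y) - ∫ y in 0..t - L, g y := by
      ext t
      exact (intervalIntegral.integral_interval_sub_left (hg.intervalIntegrable _ _)
        (hg.intervalIntegrable _ _)).symm
    rw [hW]
    exact (HasDerivAt.comp_add_const t L (hΦ _)).sub (HasDerivAt.comp_sub_const t L (hΦ _))
  have hW_even : W.Even := fun t => by
    simp only [W]
    rw [show -t - L = -(t + L) by ring, show -t + L = -(t - L) by ring,
      ← intervalIntegral.integral_comp_neg]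
    simp only [hg_even.eq]
  have hW_anti : AntitoneOn W (Ici 0) := by
    refine antitoneOn_of_deriv_nonpos (convex_Ici 0)
      (fun t _ => (hW_deriv t).continuousAt.continuousWithinAt)
      (fun t _ => (hW_deriv t).differentiableAt.differentiableWithinAt) fun t ht => ?_
    rw [interior_Ici, mem_Ioi] at ht
    rw [(hW_deriv t).deriv, sub_nonpos, ← hg_even.apply_abs (t - L)]
    exact hg_anti (mem_Ici.2 (abs_nonneg _)) (mem_Ici.2 (by linarith))
      (abs_sub_le_iff.2 ⟨by linarith, by linarith⟩)
  change W t ≤ W s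
  rw [← hW_even.apply_abs s, ← hW_even.apply_abs t]
  exact hW_anti (mem_Ici.2 (abs_nonneg s)) (mem_Ici.2 (abs_nonneg t)) hst

theorem withDensity_ofReal_ball {g : ℝ → ℝ} (hg : Continuous g) (hg_nonneg : 0 ≤ g) (c : ℝ)
    {L : ℝ} (hL : 0 ≤ L) :
    volume.withDensity (fun y => ENNReal.ofReal (g y)) (Metric.ball c L) =
      ENNReal.ofReal (∫ y in c - L..c + L, g y) := by
  rw [withDensity_apply _ measurableSet_ball, Real.ball_eq_Ioo,
    intervalIntegral.integral_of_le (by linarith), integral_Ioc_eq_integral_Ioo,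
    ofReal_integral_eq_lintegral_ofReal (hg.integrableOn_Icc.mono_set Ioo_subset_Icc_self)
      (ae_of_all _ hg_nonneg)]

theorem withDensity_ofReal_setOf_abs_add_mul_lt_le {g : ℝ → ℝ} (hg : Continuous g)
    (hg_nonneg : 0 ≤ g) (hg_even : g.Even) (hg_anti : AntitoneOn g (Ici 0)) {b b' w h : ℝ}
    (hh : 0 ≤ h) (hb : |b| ≤ |b'|) :
    volume.withDensity (fun y => ENNReal.ofReal (g y)) {y | |b' + y * w| < h} ≤
      volume.withDensity (fun y => ENNReal.ofReal (g y)) {y | |b + y * w| < h} := by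
  rcases eq_or_ne w 0 with rfl | hw
  · simp only [mul_zero, add_zero]
    exact measure_mono fun y hy => hb.trans_lt hy
  have hball (b : ℝ) : {y | |b + y * w| < h} = Metric.ball (-b / w) (h / |w|) := by
    ext y
    rw [mem_ofPred_eq, Metric.mem_ball, Real.dist_eq, lt_div_iff₀ (abs_pos.2 hw), ← abs_mul]
    congr! 2
    field_simp
    ring
  have hL : 0 ≤ h / |w| := div_nonneg hh (abs_nonneg w)
  rw [hball, hball, withDensity_ofReal_ball hg hg_nonneg _ hL,
    withDensity_ofReal_ball hg hg_nonneg _ hL]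
  refine ENNReal.ofReal_le_ofReal (intervalIntegral_window_le_of_abs_le hg hg_even hg_anti hL ?_)
  rw [abs_div, abs_div, abs_neg, abs_neg]
  gcongr

lemma IsStrip.measurableSet {S : Set (ℝ × ℝ)} (hS : IsStrip S) : MeasurableSet S := by
  obtain ⟨u, h, -, -, rfl⟩ := hS
  exact measurableSet_lt (by fun_prop) measurable_const

theorem IsStrip.withDensity_ofReal_preimage_mk_le {g : ℝ → ℝ} (hg : Continuous g)
    (hg_nonneg : 0 ≤ g) (hg_even : g.Even) (hg_anti : AntitoneOn g (Ici 0)) {S : Set (ℝ × ℝ)}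
    (hS : IsStrip S) {x x' : ℝ} (hx : |x| ≤ |x'|) :
    volume.withDensity (fun y => ENNReal.ofReal (g y)) (Prod.mk x' ⁻¹' S) ≤
      volume.withDensity (fun y => ENNReal.ofReal (g y)) (Prod.mk x ⁻¹' S) := by
  obtain ⟨u, h, -, hh, rfl⟩ := hS
  have hb : |x * u.1| ≤ |x' * u.1| := by
    rw [abs_mul, abs_mul]
    exact mul_le_mul_of_nonneg_right hx (abs_nonneg _)
  simpa only [preimage_ofPred_eq] using
    withDensity_ofReal_setOf_abs_add_mul_lt_le hg hg_nonneg hg_even hg_anti (w := u.2) hh.le hb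

theorem IsStrip.prod_withDensity_mul_le (μ : Measure ℝ) {g : ℝ → ℝ} (hg : Continuous g)
    (hg_nonneg : 0 ≤ g) (hg_even : g.Even) (hg_anti : AntitoneOn g (Ici 0)) {S : Set (ℝ × ℝ)}
    (hS : IsStrip S) (a : ℝ) :
    μ.prod (volume.withDensity fun y => ENNReal.ofReal (g y)) S *
        μ.prod (volume.withDensity fun y => ENNReal.ofReal (g y)) {p | |p.1| < a} ≤
      μ.prod (volume.withDensity fun y => ENNReal.ofReal (g y)) univ *
        μ.prod (volume.withDensity fun y => ENNReal.ofReal (g y)) (S ∩ {p | |p.1| < a}) := by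
  set ν := volume.withDensity fun y => ENNReal.ofReal (g y)
  set A : Set ℝ := {x | |x| < a}
  have hA : MeasurableSet A := measurableSet_lt (by fun_prop) measurable_const
  have hAS : {p : ℝ × ℝ | |p.1| < a} = A ×ˢ univ := (prod_univ (s := A)).symm
  set G : ℝ → ℝ≥0∞ := fun x => ν (Prod.mk x ⁻¹' S)
  have hG : Measurable G := measurable_measure_prodMk_left hS.measurableSet
  have h_inter (x : ℝ) : ν (Prod.mk x ⁻¹' (S ∩ A ×ˢ univ)) = A.indicator G x := by
    by_cases hx : x ∈ A <;> simp [preimage_inter, hx, G]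
  have hmono : Monovary (A.indicator (1 : ℝ → ℝ≥0∞)) G := by
    refine monovary_of_antitone_along abs (fun x z hxz => ?_) fun x z hxz =>
      hS.withDensity_ofReal_preimage_mk_le hg hg_nonneg hg_even hg_anti hxz
    by_cases hz : z ∈ A
    · simp [hz, show x ∈ A from hxz.trans_lt hz]
    · simp [hz]
  have hcheb := lintegral_mul_lintegral_le_of_monovary μ (measurable_one.indicator hA) hG hmono
  rw [lintegral_indicator_one hA] at hcheb
  simp only [← indicator_mul_left, Pi.one_apply, one_mul] at hcheb
  rw [hAS, Measure.prod_apply hS.measurableSet, Measure.prod_prod, ← univ_prod_univ,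
    Measure.prod_prod, Measure.prod_apply (hS.measurableSet.inter (hA.prod MeasurableSet.univ))]
  simp only [h_inter]
  calc (∫⁻ x, G x ∂μ) * (μ A * ν univ) = μ A * (∫⁻ x, G x ∂μ) * ν univ := by ring
    _ ≤ μ univ * (∫⁻ x, A.indicator G x ∂μ) * ν univ := by gcongr
    _ = μ univ * ν univ * ∫⁻ x, A.indicator G x ∂μ := by ring

theorem mu2_eq_prod (n : ℕ) :
    mu2 n = (volume.withDensity fun x => ENNReal.ofReal
        ((∫ t in (-(Real.pi / 2))..(Real.pi / 2), Real.cos t ^ (n - 2))⁻¹ *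
          |x| ^ (n - 2) * Real.exp (-x ^ 2 / 2))).prod
      (volume.withDensity fun y => ENNReal.ofReal (Real.exp (-y ^ 2 / 2))) := by
  rw [prod_withDensity (by fun_prop) (by fun_prop), ← Measure.volume_eq_prod, mu2]
  congr with p
  rw [← ENNReal.ofReal_mul' (Real.exp_pos _).le, mul_assoc _ (Real.exp _), ← Real.exp_add]
  ring_nf

lemma antitoneOn_exp_neg_sq_div_two : AntitoneOn (fun y : ℝ => Real.exp (-y ^ 2 / 2)) (Ici 0) :=
  fun x hx y _ hxy => by
    simp only [Real.exp_le_exp]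
    have := pow_le_pow_left₀ (mem_Ici.1 hx) hxy 2
    linarith

theorem strip_correlation_y_axis_general (n : ℕ)
    (S₁ : Set (ℝ × ℝ)) (hS₁ : IsStrip S₁) (a : ℝ) :
    mu2 n S₁ * mu2 n {p : ℝ × ℝ | |p.1| < a} ≤
      mu2 n Set.univ * mu2 n (S₁ ∩ {p : ℝ × ℝ | |p.1| < a}) := by
  rw [mu2_eq_prod]
  exact hS₁.prod_withDensity_mul_le _ (by fun_prop) (fun y => (Real.exp_pos _).le)
    (fun y => by simp) antitoneOn_exp_neg_sq_div_two a

/-- For every strip `S₁` and every strip `S₂ = {|x| < a}` whose axis coincides with the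
`y`-axis, one has `μ₂(ℝ²)·μ₂(S₁ ∩ S₂) ≥ μ₂(S₁)·μ₂(S₂)`. -/
theorem strip_correlation_y_axis (n : ℕ) (hn : 2 ≤ n)
    (S₁ : Set (ℝ × ℝ)) (hS₁ : IsStrip S₁) (a : ℝ) (ha : 0 < a) :
    mu2 n S₁ * mu2 n {p : ℝ × ℝ | |p.1| < a} ≤
      mu2 n Set.univ * mu2 n (S₁ ∩ {p : ℝ × ℝ | |p.1| < a}) :=
  strip_correlation_y_axis_general n S₁ hS₁ a
end

section
/- Let f, g : [0,∞) → (0,∞) be measurable, locally integrable functions such that f/g is non-increasing on [0,∞). Then the function x ↦ (∫₀ˣ f(t) dt)/(∫₀ˣ g(t) dt) is non-increasing on (0,∞). -/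
open MeasureTheory

/-- Gromov's lemma: if `f, g : [0,∞) → (0,∞)` are measurable, locally integrable, and
`f/g` is non-increasing on `[0,∞)`, then `x ↦ (∫₀ˣ f)/(∫₀ˣ g)` is non-increasing
on `(0,∞)`. -/
theorem ratio_integral_antitone (f g : ℝ → ℝ)
    (hfm : Measurable f) (hgm : Measurable g)
    (hfl : LocallyIntegrableOn f (Set.Ici 0))
    (hgl : LocallyIntegrableOn g (Set.Ici 0))
    (hfpos : ∀ x ∈ Set.Ici (0 : ℝ), 0 < f x)
    (hgpos : ∀ x ∈ Set.Ici (0 : ℝ), 0 < g x)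
    (hratio : AntitoneOn (fun x => f x / g x) (Set.Ici 0)) :
    AntitoneOn (fun x => (∫ t in (0 : ℝ)..x, f t) / (∫ t in (0 : ℝ)..x, g t))
      (Set.Ioi 0) := by
  have key : ∀ (h : ℝ → ℝ), LocallyIntegrableOn h (Set.Ici 0) →
      ∀ a b : ℝ, 0 ≤ a → a ≤ b → IntervalIntegrable h volume a b := by
    intro h hl a b ha hab
    rw [intervalIntegrable_iff_integrableOn_Icc_of_le hab]
    exact hl.integrableOn_compact_subset
      (fun t ht => le_trans ha ht.1) isCompact_Icc
  intro x hx y hy hxy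
  simp only [Set.mem_Ioi] at hx hy
  have hx0 : (0:ℝ) ≤ x := le_of_lt hx
  have hxIci : x ∈ Set.Ici (0:ℝ) := hx0
  set c := f x / g x with hc
  have hcpos : 0 < c := div_pos (hfpos x hxIci) (hgpos x hxIci)
  -- interval integrabilities
  have hf0x := key f hfl 0 x le_rfl hx0
  have hg0x := key g hgl 0 x le_rfl hx0
  have hfxy := key f hfl x y hx0 hxy
  have hgxy := key g hgl x y hx0 hxy
  have hcgxy : IntervalIntegrable (fun t => c * g t) volume x y := hgxy.const_mul c
  have hcg0x : IntervalIntegrable (fun t => c * g t) volume 0 x := hg0x.const_mul c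
  -- pointwise inequalities
  have h1 : c * ∫ t in (0:ℝ)..x, g t ≤ ∫ t in (0:ℝ)..x, f t := by
    rw [← intervalIntegral.integral_const_mul]
    apply intervalIntegral.integral_mono_on hx0 hcg0x hf0x
    intro t ht
    have ht0 : t ∈ Set.Ici (0:ℝ) := ht.1
    have hr : c ≤ f t / g t := hratio ht0 hxIci ht.2
    exact (le_div_iff₀ (hgpos t ht0)).mp hr
  have h2 : (∫ t in x..y, f t) ≤ c * ∫ t in x..y, g t := by
    rw [← intervalIntegral.integral_const_mul]
    apply intervalIntegral.integral_mono_on hxy hfxy hcgxy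
    intro t ht
    have ht0 : t ∈ Set.Ici (0:ℝ) := le_trans hx0 ht.1
    have hr : f t / g t ≤ c := hratio hxIci ht0 ht.1
    exact (div_le_iff₀ (hgpos t ht0)).mp hr
  -- positivity of integrals
  have hBx : 0 < ∫ t in (0:ℝ)..x, g t := by
    apply intervalIntegral.intervalIntegral_pos_of_pos_on hg0x _ hx
    intro t ht
    exact hgpos t (le_of_lt ht.1)
  have hG : 0 ≤ ∫ t in x..y, g t := by
    apply intervalIntegral.integral_nonneg hxy
    intro t ht
    exact le_of_lt (hgpos t (le_trans hx0 ht.1))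
  have hF : 0 ≤ ∫ t in x..y, f t := by
    apply intervalIntegral.integral_nonneg hxy
    intro t ht
    exact le_of_lt (hfpos t (le_trans hx0 ht.1))
  have hAf : (∫ t in (0:ℝ)..y, f t) = (∫ t in (0:ℝ)..x, f t) + ∫ t in x..y, f t :=
    (intervalIntegral.integral_add_adjacent_intervals hf0x hfxy).symm
  have hAg : (∫ t in (0:ℝ)..y, g t) = (∫ t in (0:ℝ)..x, g t) + ∫ t in x..y, g t :=
    (intervalIntegral.integral_add_adjacent_intervals hg0x hgxy).symm
  have hBy : 0 < ∫ t in (0:ℝ)..y, g t := by rw [hAg]; linarith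
  simp only
  rw [div_le_div_iff₀ hBy hBx, hAf, hAg]
  nlinarith [mul_le_mul_of_nonneg_right h1 hG,
    mul_le_mul_of_nonneg_right h2 (le_of_lt hBx)]
end

section
/- Let k ≥ 1 be an integer, let I ⊆ ℝ be an interval of length < π, and let f : I → [0,∞). Define F on the cone C_I = {(r cos θ, r sin θ) : r > 0, θ ∈ I} by F(r cos θ, r sin θ) = r·f(θ)^{1/k}. Then F is concave on C_I if and only if for all x₁, x₂ ∈ I with x₁ ≠ x₂ and all α ∈ (0,1): f(αx₁ + (1−α)x₂)^{1/k} ≥ (sin(α|x₂−x₁|)/sin(|x₂−x₁|))·f(x₁)^{1/k} + (sin((1−α)|x₂−x₁|)/sin(|x₂−x₁|))·f(x₂)^{1/k}. -/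
open Real Set

/-! A positively 1-homogeneous function on a convex cone is concave iff it is superadditive.
On the cone over `I`, the sine rule
`sin a • e (β - b) + sin b • e (β + a) = sin (a + b) • e β`, where `e θ = (cos θ, sin θ)`,
writes any sum of two points with angles `x₁ ≠ x₂` as a positive multiple of
`sin (α δ) • e x₁ + sin ((1 - α) δ) • e x₂ = sin δ • e (α x₁ + (1 - α) x₂)`, `δ = |x₂ - x₁|`,
for an `α ∈ (0, 1)` given by the intermediate value theorem (this needs `δ < π`).
Superadditivity of `F` at such a pair is exactly the sine inequality. -/

theorem ConvexCone.concaveOn_iff_superadditive {E : Type*} [AddCommMonoid E] [Module ℝ E]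
    (C : ConvexCone ℝ E) {F : E → ℝ} (hF : ∀ p ∈ C, ∀ t : ℝ, 0 < t → F (t • p) = t * F p) :
    ConcaveOn ℝ C F ↔ ∀ p ∈ C, ∀ q ∈ C, F p + F q ≤ F (p + q) := by
  refine ⟨fun h p hp q hq => ?_, fun h => ⟨C.convex, fun p hp q hq a b ha hb hab => ?_⟩⟩
  · have hmid : (1 / 2 : ℝ) • p + (1 / 2 : ℝ) • q ∈ C :=
      C.convex hp hq (by norm_num) (by norm_num) (by norm_num)
    have hsum : p + q = (2 : ℝ) • ((1 / 2 : ℝ) • p + (1 / 2 : ℝ) • q) := by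
      rw [smul_add, smul_smul, smul_smul]; norm_num
    have := h.2 hp hq (by norm_num : (0 : ℝ) ≤ 1 / 2) (by norm_num : (0 : ℝ) ≤ 1 / 2) (by norm_num)
    rw [hsum, hF _ hmid 2 two_pos]
    simp only [smul_eq_mul] at this
    linarith
  · rcases ha.eq_or_lt with rfl | ha
    · simp_all
    rcases hb.eq_or_lt with rfl | hb
    · simp_all
    rw [smul_eq_mul, smul_eq_mul, ← hF p hp a ha, ← hF q hq b hb]
    exact h _ (C.smul_mem ha hp) _ (C.smul_mem hb hq)

theorem polarCoord_symm_fst_mul (t r θ : ℝ) :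
    polarCoord.symm (t * r, θ) = t • polarCoord.symm (r, θ) := by
  simp [polarCoord_symm_apply, mul_assoc]

theorem polarCoord_symm_fst_add (c d θ : ℝ) :
    polarCoord.symm (c + d, θ) = polarCoord.symm (c, θ) + polarCoord.symm (d, θ) := by
  simp [polarCoord_symm_apply, add_mul]

theorem polarCoord_symm_mul_sin_add (t a b β : ℝ) :
    polarCoord.symm (t * sin a, β - b) + polarCoord.symm (t * sin b, β + a) =
      polarCoord.symm (t * sin (a + b), β) := by
  ext <;> simp [polarCoord_symm_apply, sin_add, cos_add, sin_sub, cos_sub] <;> ring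

theorem polarCoord_symm_mul_sin_abs_add (t x y α : ℝ) :
    polarCoord.symm (t * sin (α * |y - x|), x) + polarCoord.symm (t * sin ((1 - α) * |y - x|), y) =
      polarCoord.symm (t * sin |y - x|, α * x + (1 - α) * y) := by
  rcases le_total x y with h | h
  · rw [abs_of_nonneg (sub_nonneg.2 h)]
    convert polarCoord_symm_mul_sin_add t (α * (y - x)) ((1 - α) * (y - x)) (α * x + (1 - α) * y)
      using 4 <;> ring_nf
  · -- every sine changes sign; absorb it into `t`
    rw [abs_of_nonpos (sub_nonpos.2 h)]
    simp only [mul_neg, sin_neg]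
    simp only [← neg_mul]
    convert polarCoord_symm_mul_sin_add (-t) (α * (y - x)) ((1 - α) * (y - x)) (α * x + (1 - α) * y)
      using 4 <;> ring_nf

theorem sin_mul_pos_of_mem_Ioo {α δ : ℝ} (hα : α ∈ Ioo (0 : ℝ) 1) (hδ0 : 0 < δ) (hδπ : δ < π) :
    0 < sin (α * δ) :=
  sin_pos_of_pos_of_lt_pi (mul_pos hα.1 hδ0) (by nlinarith [hα.2])

theorem exists_eq_mul_sin {δ c d : ℝ} (hδ0 : 0 < δ) (hδπ : δ < π) (hc : 0 < c) (hd : 0 < d) :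
    ∃ α ∈ Ioo (0 : ℝ) 1, ∃ t > 0, c = t * sin (α * δ) ∧ d = t * sin ((1 - α) * δ) := by
  let φ : ℝ → ℝ := fun α => sin (α * δ) * d - sin ((1 - α) * δ) * c
  have hφ : (0 : ℝ) ∈ Ioo (φ 0) (φ 1) := by
    have hs := sin_pos_of_pos_of_lt_pi hδ0 hδπ
    constructor <;> simp only [φ] <;> norm_num <;> positivity
  obtain ⟨α, hα, hφα⟩ := intermediate_value_Ioo zero_le_one (by fun_prop) hφ
  have hA := sin_mul_pos_of_mem_Ioo hα hδ0 hδπ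
  refine ⟨α, hα, c / sin (α * δ), div_pos hc hA, (div_mul_cancel₀ c hA.ne').symm, ?_⟩
  rw [div_mul_eq_mul_div, eq_div_iff hA.ne']
  linear_combination hφα

def sectorCone (I : Set ℝ) (hI : Convex ℝ I) (hIlen : ∀ x ∈ I, ∀ y ∈ I, |x - y| < π) :
    ConvexCone ℝ (ℝ × ℝ) where
  carrier := {p | ∃ r, 0 < r ∧ ∃ θ ∈ I, p = polarCoord.symm (r, θ)}
  smul_mem' := by
    rintro t ht _ ⟨r, hr, θ, hθ, rfl⟩
    exact ⟨t * r, mul_pos ht hr, θ, hθ, (polarCoord_symm_fst_mul t r θ).symm⟩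
  add_mem' := by
    rintro _ ⟨c, hc, x, hx, rfl⟩ _ ⟨d, hd, y, hy, rfl⟩
    rcases eq_or_ne x y with rfl | hxy
    · exact ⟨c + d, add_pos hc hd, x, hx, (polarCoord_symm_fst_add c d x).symm⟩
    have hδ : 0 < |y - x| := abs_pos.2 (sub_ne_zero.2 hxy.symm)
    obtain ⟨α, hα, t, ht, rfl, rfl⟩ := exists_eq_mul_sin hδ (hIlen y hy x hx) hc hd
    exact ⟨t * sin |y - x|, mul_pos ht (sin_pos_of_pos_of_lt_pi hδ (hIlen y hy x hx)), _,
      hI hx hy hα.1.le (Ioo.one_sub_mem hα).1.le (add_sub_cancel _ _),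
      polarCoord_symm_mul_sin_abs_add t x y α⟩

def SinConcaveOn (I : Set ℝ) (g : ℝ → ℝ) : Prop :=
  ∀ x₁ ∈ I, ∀ x₂ ∈ I, x₁ ≠ x₂ → ∀ α : ℝ, 0 < α → α < 1 →
    (sin (α * |x₂ - x₁|) / sin |x₂ - x₁|) * g x₁ +
        (sin ((1 - α) * |x₂ - x₁|) / sin |x₂ - x₁|) * g x₂
      ≤ g (α * x₁ + (1 - α) * x₂)

theorem sinConcaveOn_iff {I : Set ℝ} (hIlen : ∀ x ∈ I, ∀ y ∈ I, |x - y| < π) {g : ℝ → ℝ} :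
    SinConcaveOn I g ↔ ∀ x₁ ∈ I, ∀ x₂ ∈ I, x₁ ≠ x₂ → ∀ α ∈ Ioo (0 : ℝ) 1,
      sin (α * |x₂ - x₁|) * g x₁ + sin ((1 - α) * |x₂ - x₁|) * g x₂
        ≤ sin |x₂ - x₁| * g (α * x₁ + (1 - α) * x₂) := by
  refine forall₄_congr fun x₁ hx₁ x₂ hx₂ => forall_congr' fun hne => ?_
  have hs : 0 < sin |x₂ - x₁| :=
    sin_pos_of_pos_of_lt_pi (abs_pos.2 (sub_ne_zero.2 hne.symm)) (hIlen x₂ hx₂ x₁ hx₁)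
  simp only [mem_Ioo, and_imp, div_mul_eq_mul_div, ← add_div, div_le_iff₀ hs, mul_comm _ (sin _)]

section Sector

variable {I : Set ℝ} (hI : Convex ℝ I) (hIlen : ∀ x ∈ I, ∀ y ∈ I, |x - y| < π)
  {g : ℝ → ℝ} {F : ℝ × ℝ → ℝ}

theorem superadditiveOn_sectorCone_iff
    (hF : ∀ r, 0 < r → ∀ θ ∈ I, F (polarCoord.symm (r, θ)) = r * g θ) :
    (∀ p ∈ sectorCone I hI hIlen, ∀ q ∈ sectorCone I hI hIlen, F p + F q ≤ F (p + q)) ↔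
      SinConcaveOn I g := by
  rw [sinConcaveOn_iff hIlen]
  constructor
  · intro h x₁ hx₁ x₂ hx₂ hne α hα
    have hδ : 0 < |x₂ - x₁| := abs_pos.2 (sub_ne_zero.2 hne.symm)
    have hs : 0 < sin |x₂ - x₁| := sin_pos_of_pos_of_lt_pi hδ (hIlen x₂ hx₂ x₁ hx₁)
    have hA := sin_mul_pos_of_mem_Ioo hα hδ (hIlen x₂ hx₂ x₁ hx₁)
    have hB := sin_mul_pos_of_mem_Ioo (Ioo.one_sub_mem hα) hδ (hIlen x₂ hx₂ x₁ hx₁)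
    have hβ : α * x₁ + (1 - α) * x₂ ∈ I :=
      hI hx₁ hx₂ hα.1.le (Ioo.one_sub_mem hα).1.le (add_sub_cancel _ _)
    have hsum := polarCoord_symm_mul_sin_abs_add 1 x₁ x₂ α
    simp only [one_mul] at hsum
    have := h _ ⟨_, hA, x₁, hx₁, rfl⟩ _ ⟨_, hB, x₂, hx₂, rfl⟩
    rwa [hsum, hF _ hA x₁ hx₁, hF _ hB x₂ hx₂, hF _ hs _ hβ] at this
  · rintro h _ ⟨c, hc, x₁, hx₁, rfl⟩ _ ⟨d, hd, x₂, hx₂, rfl⟩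
    rcases eq_or_ne x₁ x₂ with rfl | hne
    · rw [← polarCoord_symm_fst_add, hF c hc x₁ hx₁, hF d hd x₁ hx₁,
        hF _ (add_pos hc hd) x₁ hx₁, add_mul]
    have hδ : 0 < |x₂ - x₁| := abs_pos.2 (sub_ne_zero.2 hne.symm)
    have hs : 0 < sin |x₂ - x₁| := sin_pos_of_pos_of_lt_pi hδ (hIlen x₂ hx₂ x₁ hx₁)
    obtain ⟨α, hα, t, ht, rfl, rfl⟩ := exists_eq_mul_sin hδ (hIlen x₂ hx₂ x₁ hx₁) hc hd
    have hβ : α * x₁ + (1 - α) * x₂ ∈ I :=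
      hI hx₁ hx₂ hα.1.le (Ioo.one_sub_mem hα).1.le (add_sub_cancel _ _)
    rw [polarCoord_symm_mul_sin_abs_add, hF _ hc x₁ hx₁, hF _ hd x₂ hx₂,
      hF _ (mul_pos ht hs) _ hβ, mul_assoc, mul_assoc, mul_assoc, ← mul_add]
    exact mul_le_mul_of_nonneg_left (h x₁ hx₁ x₂ hx₂ hne α hα) ht.le

theorem concaveOn_sectorCone_iff
    (hF : ∀ r, 0 < r → ∀ θ ∈ I, F (polarCoord.symm (r, θ)) = r * g θ) :
    ConcaveOn ℝ (sectorCone I hI hIlen) F ↔ SinConcaveOn I g := by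
  refine ((sectorCone I hI hIlen).concaveOn_iff_superadditive ?_).trans
    (superadditiveOn_sectorCone_iff hI hIlen hF)
  rintro _ ⟨r, hr, θ, hθ, rfl⟩ t ht
  rw [← polarCoord_symm_fst_mul, hF _ (mul_pos ht hr) θ hθ, hF r hr θ hθ, mul_assoc]

end Sector

theorem sinPow_concave_iff_general (k : ℕ)
    (I : Set ℝ) (hIconv : Convex ℝ I)
    (hIlen : ∀ x ∈ I, ∀ y ∈ I, |x - y| < Real.pi)
    (f : ℝ → ℝ)
    (F : ℝ × ℝ → ℝ)
    (hF : ∀ r : ℝ, 0 < r → ∀ θ ∈ I,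
      F (r * Real.cos θ, r * Real.sin θ) = r * f θ ^ (1 / (k : ℝ))) :
    ConcaveOn ℝ
        {p : ℝ × ℝ | ∃ r : ℝ, 0 < r ∧ ∃ θ ∈ I, p = (r * Real.cos θ, r * Real.sin θ)}
        F ↔
      ∀ x₁ ∈ I, ∀ x₂ ∈ I, x₁ ≠ x₂ → ∀ α : ℝ, 0 < α → α < 1 →
        (Real.sin (α * |x₂ - x₁|) / Real.sin |x₂ - x₁|) * f x₁ ^ (1 / (k : ℝ)) +
            (Real.sin ((1 - α) * |x₂ - x₁|) / Real.sin |x₂ - x₁|) * f x₂ ^ (1 / (k : ℝ))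
          ≤ f (α * x₁ + (1 - α) * x₂) ^ (1 / (k : ℝ)) :=
  -- `polarCoord.symm (r, θ)` unfolds to `(r * cos θ, r * sin θ)`
  concaveOn_sectorCone_iff hIconv hIlen hF

/-- Characterisation of `sin^k`-concavity: for `f : I → [0,∞)` on an interval `I` of
length `< π`, the 1-homogeneous extension `F(r cos θ, r sin θ) = r·f(θ)^(1/k)` is concave
on the cone over `I` iff `f` satisfies the `sin^k`-concavity inequality. -/
theorem sinPow_concave_iff (k : ℕ) (hk : 1 ≤ k)
    (I : Set ℝ) (hIconv : Convex ℝ I)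
    (hIlen : ∀ x ∈ I, ∀ y ∈ I, |x - y| < Real.pi)
    (f : ℝ → ℝ) (hf : ∀ x ∈ I, 0 ≤ f x)
    (F : ℝ × ℝ → ℝ)
    (hF : ∀ r : ℝ, 0 < r → ∀ θ ∈ I,
      F (r * Real.cos θ, r * Real.sin θ) = r * f θ ^ (1 / (k : ℝ))) :
    ConcaveOn ℝ
        {p : ℝ × ℝ | ∃ r : ℝ, 0 < r ∧ ∃ θ ∈ I, p = (r * Real.cos θ, r * Real.sin θ)}
        F ↔
      ∀ x₁ ∈ I, ∀ x₂ ∈ I, x₁ ≠ x₂ → ∀ α : ℝ, 0 < α → α < 1 →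
        (Real.sin (α * |x₂ - x₁|) / Real.sin |x₂ - x₁|) * f x₁ ^ (1 / (k : ℝ)) +
            (Real.sin ((1 - α) * |x₂ - x₁|) / Real.sin |x₂ - x₁|) * f x₂ ^ (1 / (k : ℝ))
          ≤ f (α * x₁ + (1 - α) * x₂) ^ (1 / (k : ℝ)) :=
  sinPow_concave_iff_general k I hIconv hIlen f F hF
end

section
/- Let k ≥ 1 be an integer, let 0 ≤ a < b with b − a < π, and let f : [a,b] → [0,∞) be continuous, not identically zero, and sin^k-concave. Then (1) for all a ≤ x ≤ y ≤ z ≤ b one has f(y) ≥ min(f(x), f(z)) (so f has no local minima), and (2) f attains its maximum over [a,b] at exactly one point. -/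
/-- `f` is `sin^k`-concave on the interval `I` (of length `< π`). -/
def SinPowConcaveOn (k : ℕ) (I : Set ℝ) (f : ℝ → ℝ) : Prop :=
  ∀ x₁ ∈ I, ∀ x₂ ∈ I, x₁ ≠ x₂ → ∀ α : ℝ, 0 < α → α < 1 →
    (Real.sin (α * |x₂ - x₁|) / Real.sin |x₂ - x₁|) * f x₁ ^ (1 / (k : ℝ)) +
        (Real.sin ((1 - α) * |x₂ - x₁|) / Real.sin |x₂ - x₁|) * f x₂ ^ (1 / (k : ℝ))
      ≤ f (α * x₁ + (1 - α) * x₂) ^ (1 / (k : ℝ))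

/-!
Write `y = α x + (1 - α) z` with `x < y < z` and `d = z - x < π`. The two weights in
`sin^k`-concavity are nonnegative and add up to `(sin (α d) + sin ((1 - α) d)) / sin d > 1`,
so `f y ^ (1/k)` exceeds a multiple `> 1` of `min (f x, f z) ^ (1/k)`. Hence
`f y ≥ min (f x, f z)`, strictly when the minimum is positive. Two distinct maximisers would
then be beaten by their midpoint, the maximum being positive as `f ≢ 0`.
-/

open Real Set

theorem Real.sin_lt_sin_mul_add_sin_one_sub_mul {d α : ℝ} (hd₀ : 0 < d) (hd : d < 2 * π)
    (hα₀ : 0 < α) (hα₁ : α < 1) : sin d < sin (α * d) + sin ((1 - α) * d) := by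
  have hsin : 0 < sin (d / 2) := sin_pos_of_pos_of_lt_pi (by linarith) (by linarith)
  have hcos : cos (d / 2) < cos ((2 * α - 1) * (d / 2)) := by
    rw [← cos_abs ((2 * α - 1) * (d / 2)), abs_mul, abs_of_pos (half_pos hd₀)]
    refine cos_lt_cos_of_nonneg_of_le_pi (by positivity) (by linarith) ?_
    have : |2 * α - 1| < 1 := abs_lt.mpr ⟨by linarith, by linarith⟩
    nlinarith
  calc sin d = 2 * sin (d / 2) * cos (d / 2) := by rw [← sin_two_mul]; ring_nf
    _ < 2 * sin (d / 2) * cos ((2 * α - 1) * (d / 2)) := by gcongr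
    _ = sin (α * d) + sin ((1 - α) * d) := by rw [sin_add_sin]; ring_nf

namespace SinPowConcaveOn

variable {k : ℕ} {I : Set ℝ} {f : ℝ → ℝ} {x y z : ℝ}

theorem exists_one_lt_mul_min_rpow_le (hconc : SinPowConcaveOn k I f) (hx : x ∈ I) (hz : z ∈ I)
    (hfx : 0 ≤ f x) (hfz : 0 ≤ f z) (hxy : x < y) (hyz : y < z) (hπ : z - x < π) :
    ∃ w, 1 < w ∧ w * min (f x) (f z) ^ (1 / (k : ℝ)) ≤ f y ^ (1 / (k : ℝ)) := by
  set d := z - x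
  set α := (z - y) / d
  have hd : 0 < d := by linarith
  have hα₀ : 0 < α := div_pos (by linarith) hd
  have hα₁ : α < 1 := (div_lt_one hd).mpr (by linarith)
  have hsin : 0 < sin d := sin_pos_of_pos_of_lt_pi hd hπ
  have hc₁ : 0 ≤ sin (α * d) / sin d :=
    div_nonneg (sin_nonneg_of_nonneg_of_le_pi (by positivity) (by nlinarith)) hsin.le
  have hc₂ : 0 ≤ sin ((1 - α) * d) / sin d :=
    div_nonneg (sin_nonneg_of_nonneg_of_le_pi (by nlinarith) (by nlinarith)) hsin.le
  have hy : α * x + (1 - α) * z = y := by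
    simp only [α, d]
    field_simp [(sub_pos.mpr (hxy.trans hyz)).ne']
    ring
  have hconc_xz := hconc x hx z hz (hxy.trans hyz).ne α hα₀ hα₁
  rw [abs_of_pos hd, hy] at hconc_xz
  refine ⟨sin (α * d) / sin d + sin ((1 - α) * d) / sin d, ?_, ?_⟩
  · rw [← add_div, one_lt_div hsin]
    exact sin_lt_sin_mul_add_sin_one_sub_mul hd (by linarith [pi_pos]) hα₀ hα₁
  · have hmin : 0 ≤ min (f x) (f z) := le_min hfx hfz
    calc _ = sin (α * d) / sin d * min (f x) (f z) ^ (1 / (k : ℝ))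
          + sin ((1 - α) * d) / sin d * min (f x) (f z) ^ (1 / (k : ℝ)) := add_mul _ _ _
      _ ≤ sin (α * d) / sin d * f x ^ (1 / (k : ℝ))
          + sin ((1 - α) * d) / sin d * f z ^ (1 / (k : ℝ)) := by
        gcongr
        · exact min_le_left _ _
        · exact min_le_right _ _
      _ ≤ _ := hconc_xz

theorem min_le_of_lt_of_lt (hconc : SinPowConcaveOn k I f) (hk : 0 < k) (hI : I.OrdConnected)
    (hf : ∀ x ∈ I, 0 ≤ f x) (hx : x ∈ I) (hz : z ∈ I) (hxy : x < y) (hyz : y < z)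
    (hπ : z - x < π) : min (f x) (f z) ≤ f y := by
  have hy : y ∈ I := hI.out hx hz ⟨hxy.le, hyz.le⟩
  have hmin : 0 ≤ min (f x) (f z) := le_min (hf x hx) (hf z hz)
  obtain ⟨w, hw, hle⟩ :=
    hconc.exists_one_lt_mul_min_rpow_le hx hz (hf x hx) (hf z hz) hxy hyz hπ
  rw [← rpow_le_rpow_iff hmin (hf y hy) (one_div_pos.mpr (Nat.cast_pos.mpr hk))]
  exact (le_mul_of_one_le_left (by positivity) hw.le).trans hle

theorem min_lt_of_lt_of_lt (hconc : SinPowConcaveOn k I f) (hk : 0 < k) (hI : I.OrdConnected)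
    (hf : ∀ x ∈ I, 0 ≤ f x) (hx : x ∈ I) (hz : z ∈ I) (hxy : x < y) (hyz : y < z)
    (hπ : z - x < π) (hpos : 0 < min (f x) (f z)) : min (f x) (f z) < f y := by
  have hy : y ∈ I := hI.out hx hz ⟨hxy.le, hyz.le⟩
  obtain ⟨w, hw, hle⟩ :=
    hconc.exists_one_lt_mul_min_rpow_le hx hz (hf x hx) (hf z hz) hxy hyz hπ
  rw [← rpow_lt_rpow_iff hpos.le (hf y hy) (one_div_pos.mpr (Nat.cast_pos.mpr hk))]
  exact (lt_mul_of_one_lt_left (by positivity) hw).trans_le hle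

theorem eq_of_isMaxOn (hconc : SinPowConcaveOn k I f) (hk : 0 < k) (hI : I.OrdConnected)
    (hf : ∀ x ∈ I, 0 ≤ f x) (hx : x ∈ I) (hz : z ∈ I) (hπ : |z - x| < π)
    (hmax_x : IsMaxOn f I x) (hmax_z : IsMaxOn f I z) (hpos : 0 < f x) : x = z := by
  have hfz : f z = f x := le_antisymm (hmax_x hz) (hmax_z hx)
  by_contra hne
  wlog hxz : x < z generalizing x z
  · exact this hz hx (by rwa [abs_sub_comm]) hmax_z hmax_x (hfz ▸ hpos) hfz.symm (Ne.symm hne)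
      ((not_lt.mp hxz).lt_of_ne' hne)
  have hxm : x < (x + z) / 2 := left_lt_add_div_two.mpr hxz
  have hmz : (x + z) / 2 < z := add_div_two_lt_right.mpr hxz
  have hmid := hconc.min_lt_of_lt_of_lt hk hI hf hx hz hxm hmz ((le_abs_self _).trans_lt hπ)
    (by simpa [hfz])
  rw [hfz, min_self] at hmid
  exact hmid.not_ge (hmax_x (hI.out hx hz ⟨hxm.le, hmz.le⟩))

end SinPowConcaveOn

theorem sinPowConcave_no_local_min_and_unique_max_general (k : ℕ) (hk : 1 ≤ k)
    (a b : ℝ) (hab : a < b) (hlen : b - a < Real.pi)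
    (f : ℝ → ℝ) (hfc : ContinuousOn f (Set.Icc a b))
    (hfnonneg : ∀ x ∈ Set.Icc a b, 0 ≤ f x)
    (hfne : ∃ x ∈ Set.Icc a b, f x ≠ 0)
    (hconc : SinPowConcaveOn k (Set.Icc a b) f) :
    (∀ x y z : ℝ, a ≤ x → x ≤ y → y ≤ z → z ≤ b → min (f x) (f z) ≤ f y) ∧
      (∃! m : ℝ, m ∈ Set.Icc a b ∧ ∀ x ∈ Set.Icc a b, f x ≤ f m) := by
  have hπ : ∀ x ∈ Icc a b, ∀ z ∈ Icc a b, |z - x| < π := fun x hx z hz ↦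
    (abs_sub_le_iff.mpr ⟨by linarith [hx.1, hz.2], by linarith [hx.2, hz.1]⟩).trans_lt hlen
  constructor
  · intro x y z hax hxy hyz hzb
    obtain rfl | hxy := hxy.eq_or_lt
    · exact min_le_left _ _
    obtain rfl | hyz := hyz.eq_or_lt
    · exact min_le_right _ _
    have hx : x ∈ Icc a b := ⟨hax, by linarith⟩
    have hz : z ∈ Icc a b := ⟨by linarith, hzb⟩
    exact hconc.min_le_of_lt_of_lt hk ordConnected_Icc hfnonneg hx hz hxy hyz
      ((le_abs_self _).trans_lt (hπ x hx z hz))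
  · obtain ⟨m, hm, hmax⟩ := isCompact_Icc.exists_isMaxOn (nonempty_Icc.mpr hab.le) hfc
    obtain ⟨x₀, hx₀, hfx₀⟩ := hfne
    have hpos : 0 < f m := ((hfnonneg x₀ hx₀).lt_of_ne' hfx₀).trans_le (hmax hx₀)
    refine ⟨m, ⟨hm, fun x hx ↦ hmax hx⟩, fun m' ⟨hm', hmax'⟩ ↦ ?_⟩
    exact (hconc.eq_of_isMaxOn hk ordConnected_Icc hfnonneg hm hm' (hπ m hm m' hm') hmax
      (isMaxOn_iff.mpr hmax') hpos).symm

/-- A continuous, not identically zero, `sin^k`-concave function `f : [a,b] → [0,∞)`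
(with `b - a < π`) has no local minima (`f(y) ≥ min(f(x), f(z))` for `x ≤ y ≤ z`) and
attains its maximum at exactly one point. -/
theorem sinPowConcave_no_local_min_and_unique_max (k : ℕ) (hk : 1 ≤ k)
    (a b : ℝ) (hab : a < b) (ha : 0 ≤ a) (hlen : b - a < Real.pi)
    (f : ℝ → ℝ) (hfc : ContinuousOn f (Set.Icc a b))
    (hfnonneg : ∀ x ∈ Set.Icc a b, 0 ≤ f x)
    (hfne : ∃ x ∈ Set.Icc a b, f x ≠ 0)
    (hconc : SinPowConcaveOn k (Set.Icc a b) f) :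
    (∀ x y z : ℝ, a ≤ x → x ≤ y → y ≤ z → z ≤ b → min (f x) (f z) ≤ f y) ∧
      (∃! m : ℝ, m ∈ Set.Icc a b ∧ ∀ x ∈ Set.Icc a b, f x ≤ f m) :=
  sinPowConcave_no_local_min_and_unique_max_general k hk a b hab hlen f hfc hfnonneg hfne hconc
end

section
/- Let k ≥ 1 be an integer, 0 < ε < π/2, and ε < τ < π. Let f : [0,τ] → [0,∞) be continuous, sin^k-concave, attaining its maximum at 0, and with f(ε) > 0. Let c = f(ε)/cos(ε)^k and h(t) = c·cos(t)^k. Then f(x) ≥ h(x) for all x ∈ [0,ε], f(x) ≤ h(x) for all x ∈ [ε,τ], and τ ≤ π/2. -/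
open Real Set Filter Topology

theorem SinPowConcaveOn.sin_mul_add_sin_mul_le {k : ℕ} {I : Set ℝ} {f : ℝ → ℝ}
    (hf : SinPowConcaveOn k I f) {a b t : ℝ} (ha : a ∈ I) (hb : b ∈ I) (hat : a ≤ t)
    (htb : t ≤ b) (hba : b - a < π) :
    sin (b - t) * f a ^ (1 / (k : ℝ)) + sin (t - a) * f b ^ (1 / (k : ℝ)) ≤
      sin (b - a) * f t ^ (1 / (k : ℝ)) := by
  rcases hat.eq_or_lt with rfl | hat
  · simp
  rcases htb.eq_or_lt with rfl | htb
  · simp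
  have hab : 0 < b - a := by linarith
  have hsin : 0 < sin (b - a) := sin_pos_of_pos_of_lt_pi hab hba
  have H := hf a ha b hb (by linarith) ((b - t) / (b - a)) (div_pos (by linarith) hab)
    ((div_lt_one hab).mpr (by linarith))
  have e₁ : (b - t) / (b - a) * (b - a) = b - t := by field_simp
  have e₂ : (1 - (b - t) / (b - a)) * (b - a) = t - a := by field_simp; ring
  have e₃ : (b - t) / (b - a) * a + (1 - (b - t) / (b - a)) * b = t := by field_simp; ring
  rw [abs_of_pos hab, e₁, e₂, e₃, div_mul_eq_mul_div, div_mul_eq_mul_div, ← add_div,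
    div_le_iff₀ hsin] at H
  linarith

section SineChord

variable {g : ℝ → ℝ}

theorem le_mul_cos_of_sin_chord {y : ℝ} (hy : 0 < y) (hyπ : y < π) (hg₀ : 0 ≤ g 0)
    (hmax : ∀ t ∈ Ioo 0 y, g t ≤ g 0)
    (hchord : ∀ t ∈ Ioo 0 y, sin (y - t) * g 0 + sin t * g y ≤ sin y * g t) :
    g y ≤ g 0 * cos y := by
  have hbound : ∀ t ∈ Ioo 0 y, g y ≤ g 0 * cos (y - t) := by
    rintro t ⟨ht, hty⟩
    have hsin_t : 0 < sin t := sin_pos_of_pos_of_lt_pi ht (by linarith)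
    have hsin_yt : 0 ≤ sin (y - t) := sin_nonneg_of_nonneg_of_le_pi (by linarith) (by linarith)
    have hsin_y : 0 ≤ sin y := sin_nonneg_of_nonneg_of_le_pi hy.le hyπ.le
    have hsin_add : sin y = sin (y - t) * cos t + cos (y - t) * sin t := by
      rw [← sin_add, sub_add_cancel]
    have hcos : sin (y - t) * (cos t - 1) * g 0 ≤ 0 :=
      mul_nonpos_of_nonpos_of_nonneg
        (mul_nonpos_of_nonneg_of_nonpos hsin_yt (by linarith [cos_le_one t])) hg₀
    have hgt : sin y * g t ≤ sin y * g 0 := mul_le_mul_of_nonneg_left (hmax t ⟨ht, hty⟩) hsin_y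
    refine le_of_mul_le_mul_right ?_ hsin_t
    linear_combination hchord t ⟨ht, hty⟩ + hgt + hcos + g 0 * hsin_add
  have hlim : Tendsto (fun t => g 0 * cos (y - t)) (𝓝[>] 0) (𝓝 (g 0 * cos y)) := by
    have hcont : Continuous fun t => g 0 * cos (y - t) := by fun_prop
    simpa using (hcont.tendsto 0).mono_left nhdsWithin_le_nhds
  exact ge_of_tendsto hlim <|
    eventually_of_mem (Ioo_mem_nhdsGT hy) hbound

theorem mul_cos_le_mul_cos_of_sin_chord {s y : ℝ} (hs : 0 ≤ s) (hsy : s ≤ y) (hy : 0 < y)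
    (hyπ : y ≤ π / 2) (hchord : sin (y - s) * g 0 + sin s * g y ≤ sin y * g s)
    (hgy : g y ≤ g 0 * cos y) :
    g y * cos s ≤ g s * cos y := by
  have hcos_y : 0 ≤ cos y := cos_nonneg_of_mem_Icc ⟨by linarith [pi_pos], hyπ⟩
  have hsin_y : 0 < sin y := sin_pos_of_pos_of_lt_pi hy (by linarith [pi_pos])
  have hsin_ys : 0 ≤ sin (y - s) :=
    sin_nonneg_of_nonneg_of_le_pi (by linarith) (by linarith [pi_pos])
  have hsin_sub : sin y * cos s = sin (y - s) + cos y * sin s := by rw [sin_sub]; ring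
  refine le_of_mul_le_mul_left ?_ hsin_y
  calc sin y * (g y * cos s) = sin (y - s) * g y + sin s * g y * cos y := by
        rw [← mul_assoc, mul_comm _ (g y), mul_assoc, hsin_sub]; ring
    _ ≤ sin (y - s) * (g 0 * cos y) + sin s * g y * cos y := by gcongr
    _ = cos y * (sin (y - s) * g 0 + sin s * g y) := by ring
    _ ≤ cos y * (sin y * g s) := by gcongr
    _ = sin y * (g s * cos y) := by ring

end SineChord

theorem SinPowConcaveOn.sin_mul_add_sin_mul_le_of_zero_mem {k : ℕ} {I : Set ℝ} {f : ℝ → ℝ}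
    (hf : SinPowConcaveOn k I f) (h0 : 0 ∈ I) {y t : ℝ} (hy : y ∈ I) (ht : t ∈ Icc 0 y)
    (hyπ : y < π) :
    sin (y - t) * f 0 ^ (1 / (k : ℝ)) + sin t * f y ^ (1 / (k : ℝ)) ≤
      sin y * f t ^ (1 / (k : ℝ)) := by
  simpa only [sub_zero] using hf.sin_mul_add_sin_mul_le h0 hy ht.1 ht.2 (by linarith)

theorem SinPowConcaveOn.rpow_le_rpow_mul_cos {k : ℕ} {τ : ℝ} {f : ℝ → ℝ}
    (hf : SinPowConcaveOn k (Icc 0 τ) f) (hτ : τ < π) (hf₀ : ∀ x ∈ Icc 0 τ, 0 ≤ f x)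
    (hmax : ∀ x ∈ Icc 0 τ, f x ≤ f 0) {y : ℝ} (hy : y ∈ Ioc 0 τ) :
    f y ^ (1 / (k : ℝ)) ≤ f 0 ^ (1 / (k : ℝ)) * cos y := by
  have hsub : Ioo 0 y ⊆ Icc 0 τ := Ioo_subset_Icc_self.trans (Icc_subset_Icc_right hy.2)
  refine le_mul_cos_of_sin_chord (g := fun x => f x ^ (1 / (k : ℝ))) hy.1 (by linarith [hy.2])
    (rpow_nonneg (hf₀ 0 ⟨le_rfl, hy.1.le.trans hy.2⟩) _)
    (fun t ht => rpow_le_rpow (hf₀ t (hsub ht)) (hmax t (hsub ht)) (by positivity))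
    (fun t ht => ?_)
  exact hf.sin_mul_add_sin_mul_le_of_zero_mem ⟨le_rfl, hy.1.le.trans hy.2⟩
    (Ioc_subset_Icc_self hy) (Ioo_subset_Icc_self ht) (by linarith [hy.2])

theorem mul_pow_le_mul_pow_of_rpow_one_div_mul_le {k : ℕ} (hk : k ≠ 0) {a b u v : ℝ}
    (ha : 0 ≤ a) (hb : 0 ≤ b) (hu : 0 ≤ u)
    (h : a ^ (1 / (k : ℝ)) * u ≤ b ^ (1 / (k : ℝ)) * v) :
    a * u ^ k ≤ b * v ^ k := by
  have hpow := pow_le_pow_left₀ (mul_nonneg (rpow_nonneg ha _) hu) h k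
  rwa [mul_pow, mul_pow, one_div, rpow_inv_natCast_pow ha hk, rpow_inv_natCast_pow hb hk]
    at hpow

theorem sinPowConcave_cos_comparison_general (k : ℕ) (hk : 1 ≤ k)
    (ε τ : ℝ) (hε0 : 0 < ε) (hετ : ε < τ) (hτ : τ < Real.pi)
    (f : ℝ → ℝ)
    (hfnonneg : ∀ x ∈ Set.Icc 0 τ, 0 ≤ f x)
    (hconc : SinPowConcaveOn k (Set.Icc 0 τ) f)
    (hmax : ∀ x ∈ Set.Icc 0 τ, f x ≤ f 0)
    (hfε : 0 < f ε) :
    (∀ x ∈ Set.Icc 0 ε, f ε / Real.cos ε ^ k * Real.cos x ^ k ≤ f x) ∧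
      (∀ x ∈ Set.Icc ε τ, f x ≤ f ε / Real.cos ε ^ k * Real.cos x ^ k) ∧
      τ ≤ Real.pi / 2 := by
  set g : ℝ → ℝ := fun t => f t ^ (1 / (k : ℝ))
  have hεI : ε ∈ Icc 0 τ := ⟨hε0.le, hετ.le⟩
  have hchord : ∀ y ∈ Icc 0 τ, ∀ t ∈ Icc 0 y, sin (y - t) * g 0 + sin t * g y ≤ sin y * g t :=
    fun y hy t ht =>
      hconc.sin_mul_add_sin_mul_le_of_zero_mem ⟨le_rfl, by linarith⟩ hy ht (by linarith [hy.2])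
  have hcos : ∀ y ∈ Ioc 0 τ, g y ≤ g 0 * cos y := fun y hy =>
    hconc.rpow_le_rpow_mul_cos hτ hfnonneg hmax hy
  have hτ2 : τ ≤ π / 2 := by
    have hg₀ : 0 < g 0 := (rpow_pos_of_pos hfε _).trans_le <|
      rpow_le_rpow hfε.le (hmax ε hεI) (by positivity)
    have hcos_τ : 0 ≤ g 0 * cos τ :=
      (rpow_nonneg (hfnonneg τ ⟨by linarith, le_rfl⟩) _).trans (hcos τ ⟨by linarith, le_rfl⟩)
    by_contra! h
    nlinarith [cos_neg_of_pi_div_two_lt_of_lt h (by linarith)]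
  have hcos_ε : 0 < cos ε := cos_pos_of_mem_Ioo ⟨by linarith, by linarith⟩
  have hk0 : k ≠ 0 := by omega
  refine ⟨fun x hx => ?_, fun x hx => ?_, hτ2⟩
  · have hxI : x ∈ Icc 0 τ := ⟨hx.1, by linarith [hx.2]⟩
    rw [div_mul_eq_mul_div, div_le_iff₀ (pow_pos hcos_ε k)]
    refine mul_pow_le_mul_pow_of_rpow_one_div_mul_le hk0 hfε.le (hfnonneg x hxI)
      (cos_nonneg_of_mem_Icc ⟨by linarith [pi_pos, hx.1], by linarith [hx.2]⟩) ?_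
    exact mul_cos_le_mul_cos_of_sin_chord hx.1 hx.2 hε0 (by linarith)
      (hchord ε hεI x hx) (hcos ε ⟨hε0, hετ.le⟩)
  · have hxI : x ∈ Icc 0 τ := ⟨by linarith [hx.1], hx.2⟩
    rw [div_mul_eq_mul_div, le_div_iff₀ (pow_pos hcos_ε k)]
    refine mul_pow_le_mul_pow_of_rpow_one_div_mul_le hk0 (hfnonneg x hxI) hfε.le hcos_ε.le ?_
    exact mul_cos_le_mul_cos_of_sin_chord hεI.1 hx.1 (by linarith [hx.1]) (by linarith [hx.2])
      (hchord x hxI ε ⟨hε0.le, hx.1⟩) (hcos x ⟨by linarith [hx.1], hx.2⟩)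

/-- Comparison of a `sin^k`-concave function, maximal at `0`, with the model function
`h(t) = c·cos(t)^k` matched at `ε`: `f ≥ h` on `[0,ε]`, `f ≤ h` on `[ε,τ]`, and
necessarily `τ ≤ π/2`. -/
theorem sinPowConcave_cos_comparison (k : ℕ) (hk : 1 ≤ k)
    (ε τ : ℝ) (hε0 : 0 < ε) (hε : ε < Real.pi / 2) (hετ : ε < τ) (hτ : τ < Real.pi)
    (f : ℝ → ℝ) (hfc : ContinuousOn f (Set.Icc 0 τ))
    (hfnonneg : ∀ x ∈ Set.Icc 0 τ, 0 ≤ f x)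
    (hconc : SinPowConcaveOn k (Set.Icc 0 τ) f)
    (hmax : ∀ x ∈ Set.Icc 0 τ, f x ≤ f 0)
    (hfε : 0 < f ε) :
    (∀ x ∈ Set.Icc 0 ε, f ε / Real.cos ε ^ k * Real.cos x ^ k ≤ f x) ∧
      (∀ x ∈ Set.Icc ε τ, f x ≤ f ε / Real.cos ε ^ k * Real.cos x ^ k) ∧
      τ ≤ Real.pi / 2 :=
  sinPowConcave_cos_comparison_general k hk ε τ hε0 hετ hτ f hfnonneg hconc hmax hfε
end

section
/- Let n ≥ 3 be an integer. Then the function x ↦ sin(x)·cos(x)^{n−2} / (∫₀ˣ cos(t)^{n−1} dt) is non-increasing on (0, π/2), and the function x ↦ (∫₀ˣ sin(t)²·cos(t)^{n−3} dt) / (∫₀ˣ cos(t)^{n−1} dt) is non-decreasing on (0, π/2). -/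
/-!
On `(0, π/2)` we have `sin² t · cos^(n-3) t = tan² t · cos^(n-1) t` with `tan²` increasing. For
`r` increasing and `g > 0`, the ratio `∫₀ˣ r g / ∫₀ˣ g` is increasing: `r x` bounds the weighted
average of `r` on `[0, x]` from above and that on `[x, y]` from below. Integrating
`(sin · cos^(n-2))' = cos^(n-1) - (n-2) sin² cos^(n-3)` writes the first ratio as `1 - (n-2)` times
the second.
-/

open Real Set intervalIntegral MeasureTheory

section RatioOfIntegrals

variable {f g r : ℝ → ℝ} {a b x y : ℝ}

theorem integral_mul_integral_le_of_monotoneOn (hax : a < x) (hxy : x < y)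
    (hfi : IntervalIntegrable f volume a y) (hgi : IntervalIntegrable g volume a y)
    (hg : ∀ t ∈ Ioo a y, 0 ≤ g t) (hr : MonotoneOn r (Ioo a y))
    (hfrg : EqOn f (r * g) (Ioo a y)) :
    (∫ t in a..x, f t) * ∫ t in a..y, g t ≤ (∫ t in a..y, f t) * ∫ t in a..x, g t := by
  have hsub₁ : uIcc a x ⊆ uIcc a y :=
    uIcc_subset_uIcc left_mem_uIcc (mem_uIcc_of_le hax.le hxy.le)
  have hsub₂ : uIcc x y ⊆ uIcc a y :=
    uIcc_subset_uIcc (mem_uIcc_of_le hax.le hxy.le) right_mem_uIcc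
  have hfx := hfi.mono_set hsub₁
  have hfxy := hfi.mono_set hsub₂
  have hgx := hgi.mono_set hsub₁
  have hgxy := hgi.mono_set hsub₂
  have hx : x ∈ Ioo a y := ⟨hax, hxy⟩
  have hleft : (∫ t in a..x, f t) ≤ r x * ∫ t in a..x, g t := by
    rw [← intervalIntegral.integral_const_mul]
    refine integral_mono_on_of_le_Ioo hax.le hfx (hgx.const_mul _) fun t ht => ?_
    have ht' : t ∈ Ioo a y := ⟨ht.1, ht.2.trans hxy⟩
    rw [hfrg ht']
    exact mul_le_mul_of_nonneg_right (hr ht' hx ht.2.le) (hg t ht')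
  have hright : r x * (∫ t in x..y, g t) ≤ ∫ t in x..y, f t := by
    rw [← intervalIntegral.integral_const_mul]
    refine integral_mono_on_of_le_Ioo hxy.le (hgxy.const_mul _) hfxy fun t ht => ?_
    have ht' : t ∈ Ioo a y := ⟨hax.trans ht.1, ht.2⟩
    rw [hfrg ht']
    exact mul_le_mul_of_nonneg_right (hr hx ht' ht.1.le) (hg t ht')
  have hgx_nonneg : 0 ≤ ∫ t in a..x, g t := by
    simpa using integral_mono_on_of_le_Ioo hax.le intervalIntegrable_const hgx
      fun t ht => hg t ⟨ht.1, ht.2.trans hxy⟩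
  have hgxy_nonneg : 0 ≤ ∫ t in x..y, g t := by
    simpa using integral_mono_on_of_le_Ioo hxy.le intervalIntegrable_const hgxy
      fun t ht => hg t ⟨hax.trans ht.1, ht.2⟩
  rw [← integral_add_adjacent_intervals hfx hfxy, ← integral_add_adjacent_intervals hgx hgxy]
  linarith [mul_le_mul_of_nonneg_right hleft hgxy_nonneg,
    mul_le_mul_of_nonneg_left hright hgx_nonneg]

theorem monotoneOn_integral_div_integral (hf : ContinuousOn f (Ico a b))
    (hg : ContinuousOn g (Ico a b)) (hg_pos : ∀ t ∈ Ioo a b, 0 < g t)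
    (hr : MonotoneOn r (Ioo a b)) (hfrg : EqOn f (r * g) (Ioo a b)) :
    MonotoneOn (fun x => (∫ t in a..x, f t) / ∫ t in a..x, g t) (Ioo a b) := by
  have hg_int_pos : ∀ z ∈ Ioo a b, 0 < ∫ t in a..z, g t := fun z hz =>
    intervalIntegral_pos_of_pos_on
      ((hg.mono (Icc_subset_Ico_right hz.2)).intervalIntegrable_of_Icc hz.1.le)
      (fun t ht => hg_pos t ⟨ht.1, ht.2.trans hz.2⟩) hz.1
  intro x hx y hy hxy
  rcases hxy.eq_or_lt with rfl | hlt
  · exact le_rfl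
  have hsub : Ioo a y ⊆ Ioo a b := Ioo_subset_Ioo_right hy.2.le
  rw [div_le_div_iff₀ (hg_int_pos x hx) (hg_int_pos y hy)]
  exact integral_mul_integral_le_of_monotoneOn hx.1 hlt
    ((hf.mono (Icc_subset_Ico_right hy.2)).intervalIntegrable_of_Icc hy.1.le)
    ((hg.mono (Icc_subset_Ico_right hy.2)).intervalIntegrable_of_Icc hy.1.le)
    (fun t ht => (hg_pos t (hsub ht)).le) (hr.mono hsub) (hfrg.mono hsub)

end RatioOfIntegrals

theorem integral_cos_pow_add_two_eq (m : ℕ) (a b : ℝ) :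
    ∫ t in a..b, cos t ^ (m + 2) =
      sin b * cos b ^ (m + 1) - sin a * cos a ^ (m + 1) +
        (m + 1) * ∫ t in a..b, sin t ^ 2 * cos t ^ m := by
  have hderiv : ∀ x, HasDerivAt (fun x => sin x * cos x ^ (m + 1))
      (cos x ^ (m + 2) - (m + 1) * (sin x ^ 2 * cos x ^ m)) x := fun x => by
    have h : HasDerivAt (fun x => sin x * cos x ^ (m + 1)) _ x :=
      (hasDerivAt_sin x).mul ((hasDerivAt_cos x).pow (m + 1))
    convert h using 1
    rw [Nat.add_sub_cancel]
    push_cast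
    ring
  have hFTC := integral_eq_sub_of_hasDerivAt (a := a) (b := b) (fun x _ => hderiv x)
    (by apply Continuous.intervalIntegrable; fun_prop)
  rw [intervalIntegral.integral_sub (by apply Continuous.intervalIntegrable; fun_prop)
    (by apply Continuous.intervalIntegrable; fun_prop),
    intervalIntegral.integral_const_mul] at hFTC
  linarith

theorem sin_sq_mul_cos_pow_eq_tan_sq_mul {x : ℝ} (hx : cos x ≠ 0) (m : ℕ) :
    sin x ^ 2 * cos x ^ m = tan x ^ 2 * cos x ^ (m + 2) := by
  rw [tan_eq_sin_div_cos]
  field_simp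
  ring

theorem monotoneOn_tan_sq : MonotoneOn (fun x => tan x ^ 2) (Ico 0 (π / 2)) := by
  intro x hx y hy hxy
  have hmem : ∀ z ∈ Ico 0 (π / 2), z ∈ Ioo (-(π / 2)) (π / 2) := fun z hz =>
    ⟨by linarith [pi_pos, hz.1], hz.2⟩
  exact pow_le_pow_left₀ (tan_nonneg_of_nonneg_of_le_pi_div_two hx.1 hx.2.le)
    (strictMonoOn_tan.monotoneOn (hmem x hx) (hmem y hy) hxy) 2

theorem integral_cos_pow_pos (k : ℕ) {x : ℝ} (hx : x ∈ Ioo 0 (π / 2)) :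
    0 < ∫ t in (0 : ℝ)..x, cos t ^ k :=
  intervalIntegral_pos_of_pos_on (by apply Continuous.intervalIntegrable; fun_prop)
    (fun t ht => pow_pos (cos_pos_of_mem_Ioo ⟨by linarith [pi_pos, ht.1], ht.2.trans hx.2⟩) k)
    hx.1

/-- For `n ≥ 3`, the function `x ↦ sin(x)·cos(x)^(n-2) / ∫₀ˣ cos(t)^(n-1) dt` is
non-increasing on `(0, π/2)`, and the function
`x ↦ (∫₀ˣ sin(t)²·cos(t)^(n-3) dt) / (∫₀ˣ cos(t)^(n-1) dt)` is non-decreasing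
on `(0, π/2)`. -/
theorem sin_cos_ratio_monotone (n : ℕ) (hn : 3 ≤ n) :
    AntitoneOn
        (fun x : ℝ => Real.sin x * Real.cos x ^ (n - 2) /
          ∫ t in (0 : ℝ)..x, Real.cos t ^ (n - 1))
        (Set.Ioo 0 (Real.pi / 2)) ∧
      MonotoneOn
        (fun x : ℝ => (∫ t in (0 : ℝ)..x, Real.sin t ^ 2 * Real.cos t ^ (n - 3)) /
          ∫ t in (0 : ℝ)..x, Real.cos t ^ (n - 1))
        (Set.Ioo 0 (Real.pi / 2)) := by
  obtain ⟨m, rfl⟩ : ∃ m, n = m + 3 := ⟨n - 3, by omega⟩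
  simp only [show m + 3 - 1 = m + 2 by omega, show m + 3 - 2 = m + 1 by omega,
    Nat.add_sub_cancel]
  have hcos_pos : ∀ t ∈ Ioo 0 (π / 2), 0 < cos t := fun t ht =>
    cos_pos_of_mem_Ioo ⟨by linarith [pi_pos, ht.1], ht.2⟩
  have hratio : MonotoneOn (fun x => (∫ t in (0 : ℝ)..x, sin t ^ 2 * cos t ^ m) /
      ∫ t in (0 : ℝ)..x, cos t ^ (m + 2)) (Ioo 0 (π / 2)) :=
    monotoneOn_integral_div_integral (by fun_prop) (by fun_prop)
      (fun t ht => pow_pos (hcos_pos t ht) _) (monotoneOn_tan_sq.mono Ioo_subset_Ico_self)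
      (fun t ht => sin_sq_mul_cos_pow_eq_tan_sq_mul (hcos_pos t ht).ne' m)
  refine ⟨?_, hratio⟩
  have hanti : AntitoneOn (fun x => 1 - (m + 1) * ((∫ t in (0 : ℝ)..x, sin t ^ 2 * cos t ^ m) /
      ∫ t in (0 : ℝ)..x, cos t ^ (m + 2))) (Ioo 0 (π / 2)) := fun x hx y hy hxy =>
    sub_le_sub_left (mul_le_mul_of_nonneg_left (hratio hx hy hxy) (by positivity)) 1
  refine hanti.congr fun x hx => ?_
  have hG := (integral_cos_pow_pos (m + 2) hx).ne'
  have hid := integral_cos_pow_add_two_eq m 0 x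
  rw [sin_zero, zero_mul, sub_zero] at hid
  beta_reduce
  rw [eq_div_iff hG, sub_mul, mul_assoc, div_mul_cancel₀ _ hG]
  linarith
end
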